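/- For any lattice design X with n runs, s factors and q levels: q^s · E_0(X) = n(1 + ∑_{j=1}^s A_j(X)), where E_0(X) = n^{−1} · #{(i, k) ∈ {1,…,n}² : x_i = x_k} counts (normalized) ordered pairs of fully coincident runs. -/

import Mathlib

open Finset

/-- The contrast χ_v(X) = ∑_i ∏_j ω^{v_j x_{ij}}, with ω = exp(2πi/q). -/
noncomputable def contrast {n s q : ℕ} (X : Fin n → Fin s → Fin q)
    (v : Fin s → Fin q) : ℂ :=
  ∑ i, ∏ j, Complex.exp (2 * (Real.pi : ℂ) * Complex.I / (q : ℂ)) ^ ((v j : ℕ) * (X i j : ℕ))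

/-- The weight wt(v) = #{j : v_j ≠ 0}. -/
def wt {s q : ℕ} (v : Fin s → Fin q) : ℕ :=
  (univ.filter fun j => (v j : ℕ) ≠ 0).card

/-- The generalized word-length pattern A_k(X) = n⁻² ∑_{wt(v)=k} |χ_v(X)|². -/
noncomputable def wlp {n s q : ℕ} (X : Fin n → Fin s → Fin q) (k : ℕ) : ℝ :=
  (∑ v ∈ univ.filter (fun v : Fin s → Fin q => wt v = k),
    ‖contrast X v‖ ^ 2) / (n : ℝ) ^ 2

/-- E₀(X) = n⁻¹ #{(i,k) : x_i = x_k}, the normalized number of ordered pairs of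
fully coincident runs. -/
noncomputable def E0 {n s q : ℕ} (X : Fin n → Fin s → Fin q) : ℝ :=
  ((univ.filter fun p : Fin n × Fin n => X p.1 = X p.2).card : ℝ) / n

lemma char_sum (q : ℕ) (hq : q ≠ 0) (x y : Fin q) :
    ∑ a : Fin q, Complex.exp (2 * (Real.pi : ℂ) * Complex.I / (q : ℂ)) ^ ((a : ℕ) * (x : ℕ)) *
      (starRingEnd ℂ) (Complex.exp (2 * (Real.pi : ℂ) * Complex.I / (q : ℂ)) ^ ((a : ℕ) * (y : ℕ)))
    = if x = y then (q : ℂ) else 0 := by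
  set ζ := Complex.exp (2 * (Real.pi : ℂ) * Complex.I / (q : ℂ)) with hζdef
  have hζ : IsPrimitiveRoot ζ q := Complex.isPrimitiveRoot_exp q hq
  have hζ0 : ζ ≠ 0 := Complex.exp_ne_zero _
  have hconj : (starRingEnd ℂ) ζ = ζ⁻¹ := by
    rw [hζdef, ← Complex.exp_conj, ← Complex.exp_neg]
    congr 1
    simp [map_div₀, map_ofNat]
    ring
  have hterm : ∀ a : Fin q,
      ζ ^ ((a : ℕ) * (x : ℕ)) * (starRingEnd ℂ) (ζ ^ ((a : ℕ) * (y : ℕ)))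
      = (ζ ^ ((x : ℤ) - (y : ℤ))) ^ (a : ℕ) := by
    intro a
    rw [map_pow, hconj, inv_pow, ← zpow_natCast ζ ((a : ℕ) * (x : ℕ)),
      ← zpow_natCast ζ ((a : ℕ) * (y : ℕ)), ← div_eq_mul_inv, ← zpow_sub₀ hζ0,
      ← zpow_natCast (ζ ^ ((x : ℤ) - (y : ℤ))) (a : ℕ), ← zpow_mul]
    congr 1
    push_cast
    ring
  rw [Finset.sum_congr rfl (fun a _ => hterm a)]
  rw [Fin.sum_univ_eq_sum_range (fun i => (ζ ^ ((x : ℤ) - (y : ℤ))) ^ i) q]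
  by_cases h : x = y
  · simp [h]
  · rw [if_neg h]
    have hne1 : ζ ^ ((x : ℤ) - (y : ℤ)) ≠ 1 := by
      intro h1
      rw [hζ.zpow_eq_one_iff_dvd] at h1
      have h2 := Int.eq_zero_of_abs_lt_dvd h1 (by
        have := x.isLt; have := y.isLt
        rw [abs_lt]; omega)
      exact h (Fin.ext (by omega))
    rw [geom_sum_eq hne1]
    have : (ζ ^ ((x : ℤ) - (y : ℤ))) ^ q = 1 := by
      rw [← zpow_natCast (ζ ^ ((x : ℤ) - (y : ℤ))) q, ← zpow_mul, mul_comm, zpow_mul,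
        zpow_natCast, hζ.pow_eq_one, one_zpow]
    rw [this]
    simp

lemma sum_sq_contrast (n s q : ℕ) (hq : q ≠ 0) (X : Fin n → Fin s → Fin q) :
    ∑ v : Fin s → Fin q, (‖contrast X v‖ : ℝ) ^ 2
      = (q : ℝ) ^ s * ((univ.filter fun p : Fin n × Fin n => X p.1 = X p.2).card : ℝ) := by
  set ζ := Complex.exp (2 * (Real.pi : ℂ) * Complex.I / (q : ℂ)) with hζdef
  apply Complex.ofReal_injective
  push_cast
  calc (∑ v : Fin s → Fin q, ((‖contrast X v‖ : ℝ) ^ 2 : ℂ))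
      = ∑ v : Fin s → Fin q, contrast X v * (starRingEnd ℂ) (contrast X v) := by
        refine Finset.sum_congr rfl fun v _ => ?_
        rw [Complex.mul_conj, ← Complex.sq_norm]
        push_cast
        ring
    _ = ∑ v : Fin s → Fin q, ∑ i, ∑ k, (∏ j, ζ ^ ((v j : ℕ) * (X i j : ℕ))) *
          (starRingEnd ℂ) (∏ j, ζ ^ ((v j : ℕ) * (X k j : ℕ))) := by
        refine Finset.sum_congr rfl fun v _ => ?_
        rw [contrast, map_sum, Finset.sum_mul_sum]
    _ = ∑ i, ∑ k, ∑ v : Fin s → Fin q,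
          ∏ j, (ζ ^ ((v j : ℕ) * (X i j : ℕ)) * (starRingEnd ℂ) (ζ ^ ((v j : ℕ) * (X k j : ℕ)))) := by
        rw [Finset.sum_comm]
        refine Finset.sum_congr rfl fun i _ => ?_
        rw [Finset.sum_comm]
        refine Finset.sum_congr rfl fun k _ => ?_
        refine Finset.sum_congr rfl fun v _ => ?_
        rw [map_prod, Finset.prod_mul_distrib]
    _ = ∑ i, ∑ k, ∏ j, ∑ a : Fin q, (ζ ^ ((a : ℕ) * (X i j : ℕ)) * (starRingEnd ℂ) (ζ ^ ((a : ℕ) * (X k j : ℕ)))) := by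
        refine Finset.sum_congr rfl fun i _ => Finset.sum_congr rfl fun k _ => ?_
        rw [Finset.prod_univ_sum]
        rw [Fintype.piFinset_univ]
    _ = ∑ i, ∑ k, if X i = X k then (q : ℂ) ^ s else 0 := by
        refine Finset.sum_congr rfl fun i _ => Finset.sum_congr rfl fun k _ => ?_
        have : ∀ j, (∑ a : Fin q, ζ ^ ((a : ℕ) * (X i j : ℕ)) * (starRingEnd ℂ) (ζ ^ ((a : ℕ) * (X k j : ℕ))))
            = if X i j = X k j then (q : ℂ) else 0 := fun j => char_sum q hq (X i j) (X k j)
        rw [Finset.prod_congr rfl fun j _ => this j]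
        by_cases h : X i = X k
        · simp [h, funext_iff.mp h]
        · rw [if_neg h]
          obtain ⟨j, hj⟩ : ∃ j, X i j ≠ X k j := by
            by_contra hc
            push_neg at hc
            exact h (funext hc)
          exact Finset.prod_eq_zero (mem_univ j) (by rw [if_neg hj])
    _ = (q : ℂ) ^ s * ((univ.filter fun p : Fin n × Fin n => X p.1 = X p.2).card : ℂ) := by
        rw [← Finset.sum_product']
        rw [Finset.univ_product_univ, ← Finset.sum_filter, Finset.sum_const, nsmul_eq_mul, mul_comm]

/-- Identity (3.6a): qˢ E₀(X) = n (1 + ∑_{j=1}^{s} A_j(X)). -/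
theorem E0_wlp_identity (n s q : ℕ) (hq : 2 ≤ q)
    (X : Fin n → Fin s → Fin q) :
    (q : ℝ) ^ s * E0 X = (n : ℝ) * (1 + ∑ j ∈ Icc 1 s, wlp X j) := by
  rcases Nat.eq_zero_or_pos n with hn | hn
  · subst hn
    have hcard : (univ.filter fun p : Fin 0 × Fin 0 => X p.1 = X p.2).card = 0 := by simp
    simp [E0, hcard]
  have hn0 : (n : ℝ) ≠ 0 := Nat.cast_ne_zero.mpr hn.ne'
  have hq0 : q ≠ 0 := by omega
  haveI : NeZero q := ⟨hq0⟩
  -- wlp at 0 is 1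
  have hwt0 : (univ.filter fun v : Fin s → Fin q => wt v = 0) = {fun _ => (0 : Fin q)} := by
    ext v
    simp only [mem_filter, mem_univ, true_and, mem_singleton]
    unfold wt
    rw [Finset.card_eq_zero, Finset.filter_eq_empty_iff]
    constructor
    · intro h
      funext j
      exact Fin.ext (by simpa using h (mem_univ j))
    · intro h j _
      rw [h]
      simp
  have hc0 : contrast X (fun _ => (0 : Fin q)) = (n : ℂ) := by
    simp [contrast]
  have hwlp0 : wlp X 0 = 1 := by
    rw [wlp, hwt0, Finset.sum_singleton, hc0]
    simp [hn0]
  have hfib : ∑ k ∈ range (s + 1), ∑ v ∈ univ.filter (fun v : Fin s → Fin q => wt v = k),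
      ‖contrast X v‖ ^ 2 = ∑ v : Fin s → Fin q, ‖contrast X v‖ ^ 2 := by
    apply Finset.sum_fiberwise_of_maps_to
    intro v _
    rw [Finset.mem_range, Nat.lt_succ_iff]
    exact (Finset.card_filter_le _ _).trans (by simp)
  have hsum : ∑ k ∈ range (s + 1), wlp X k
      = (q : ℝ) ^ s * ((univ.filter fun p : Fin n × Fin n => X p.1 = X p.2).card : ℝ) / (n : ℝ) ^ 2 := by
    simp only [wlp]
    rw [← Finset.sum_div, hfib, sum_sq_contrast n s q hq0 X]
  have hsplit : ∑ k ∈ range (s + 1), wlp X k = 1 + ∑ j ∈ Icc 1 s, wlp X j := by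
    rw [Finset.sum_range_succ', hwlp0, add_comm]
    congr 1
    rw [← Finset.Ico_add_one_right_eq_Icc, Finset.sum_Ico_eq_sum_range]
    simp [add_comm]
  rw [E0, ← hsplit, hsum]
  field_simp
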